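/- arXiv:0804.1490 — 2 statements merged into one kernel-verified Lean document; each statement's English description precedes it below -/
import Mathlib

section
/- ζ₈ = e^{iπ/4} is not a norm of the quadratic extension ℚ(ζ₈, √5)/ℚ(ζ₈): for every z ∈ K = ℚ(ζ₈, √5), one has z·σ(z) ≠ ζ₈. Equivalently, for all a, b ∈ ℚ(ζ₈), a² + a·b − b² ≠ ζ₈. -/
/-!
Clearing denominators, a solution would give `A, B ∈ ℤ[ζ₈]` and `n ≠ 0` with
`A² + AB - B² = n² ζ₈`. Modulo 5 the form is the square `(A + 3B)²`, while `ζ₈` is not a square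
in `ℤ[ζ₈]/5 = 𝔽₅[X]/(X⁴ + 1)`; hence `5 ∣ n`, and since `ℤ[ζ₈]/5` is reduced, also `5 ∣ A` and
`5 ∣ B`. Dividing by 5 gives a solution with a smaller `n`, so by descent no solution exists.
-/

open Complex

/-- The eighth root of unity `ζ₈ = e^{iπ/4}`. -/
noncomputable def ζ₈ : ℂ := Complex.exp (Real.pi * Complex.I / 4)

/-- The golden ratio `θ = (1+√5)/2` as a complex number. -/
noncomputable def θ : ℂ := (((1 + Real.sqrt 5) / 2 : ℝ) : ℂ)

/-- Its conjugate `θ̄ = (1−√5)/2` as a complex number. -/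
noncomputable def θbar : ℂ := (((1 - Real.sqrt 5) / 2 : ℝ) : ℂ)

/-- The subfield `F = ℚ(ζ₈) = {p + q·ζ₈ + r·ζ₈² + s·ζ₈³ : p, q, r, s ∈ ℚ}` of `ℂ`, as a set. -/
noncomputable def Fset : Set ℂ :=
  {z | ∃ p q r s : ℚ, z = (p : ℂ) + (q : ℂ) * ζ₈ + (r : ℂ) * ζ₈ ^ 2 + (s : ℂ) * ζ₈ ^ 3}

namespace QuadraticAlgebra

variable {R S : Type*} [CommRing R] [CommRing S] {a b : R}

def liftRingHom (f : R →+* S) (u : S) (hu : u * u = f a + f b * u) :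
    QuadraticAlgebra R a b →+* S where
  toFun z := f z.re + f z.im * u
  map_one' := by simp
  map_mul' z w := by
    simp only [re_mul, im_mul, map_add, map_mul]
    linear_combination -(f z.im * f w.im) * hu
  map_zero' := by simp
  map_add' z w := by simp only [re_add, im_add, map_add]; ring

@[simp]
theorem liftRingHom_apply (f : R →+* S) (u : S) (hu : u * u = f a + f b * u)
    (z : QuadraticAlgebra R a b) : liftRingHom f u hu z = f z.re + f z.im * u :=
  rfl

end QuadraticAlgebra

theorem IsSquare.of_mul_self_eq_sq_mul {M : Type*} [CommMonoid M] {x c w : M} (hc : IsUnit c)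
    (h : x * x = c ^ 2 * w) : IsSquare w := by
  obtain ⟨u, rfl⟩ := hc
  have hw : w = (↑u⁻¹ * ↑u⁻¹) * (x * x) := by
    rw [h, pow_two]
    simp [mul_assoc]
  exact hw ▸ (IsSquare.mul ⟨_, rfl⟩ ⟨_, rfl⟩)

theorem Rat.exists_intCast_eq_mul_of_den_dvd (t : ℚ) {d : ℕ} (h : t.den ∣ d) :
    ∃ m : ℤ, (d : ℚ) * t = m := by
  obtain ⟨k, rfl⟩ := h
  exact ⟨t.num * k, by push_cast; rw [← Rat.mul_den_eq_num]; ring⟩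

theorem Irrational.eq_zero_of_add_mul_eq_zero {x : ℝ} (hx : Irrational x) {m n : ℤ}
    (h : (m : ℝ) + n * x = 0) : m = 0 ∧ n = 0 := by
  obtain rfl | hn := eq_or_ne n 0
  · simpa using h
  · exact absurd h ((hx.intCast_mul hn).intCast_add m).ne_zero

theorem zeta8_mul_self : ζ₈ * ζ₈ = I := by
  rw [ζ₈, ← Complex.exp_add]
  convert Complex.exp_pi_div_two_mul_I using 2
  ring

theorem zeta8_eq : ζ₈ = (√2 / 2 : ℝ) * (1 + I) := by
  rw [ζ₈, show (Real.pi * I / 4 : ℂ) = (Real.pi / 4 : ℝ) * I by push_cast; ring,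
    Complex.exp_mul_I, ← Complex.ofReal_cos, ← Complex.ofReal_sin,
    Real.cos_pi_div_four, Real.sin_pi_div_four]
  ring

open QuadraticAlgebra

/-- `R[ζ₈]`, built as `R[i][√i]`: the inner `ω` is `i` and the outer `ω` is `ζ₈`. -/
abbrev Cyclo8 (R : Type*) [CommRing R] := QuadraticAlgebra (QuadraticAlgebra R (-1) 0) ω 0

namespace Cyclo8

variable {R S : Type*} [CommRing R] [CommRing S]

def map (f : R →+* S) : Cyclo8 R →+* Cyclo8 S :=
  let inner : QuadraticAlgebra R (-1) 0 →+* QuadraticAlgebra S (-1) 0 :=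
    liftRingHom ((algebraMap S _).comp f) ω (by ext <;> simp)
  liftRingHom ((algebraMap _ (Cyclo8 S)).comp inner) ω (by ext <;> simp [inner])

@[simp]
theorem map_apply (f : R →+* S) (z : Cyclo8 R) :
    map f z = ⟨⟨f z.re.re, f z.re.im⟩, ⟨f z.im.re, f z.im.im⟩⟩ := by
  ext <;> simp [map]

@[simp]
theorem map_omega (f : R →+* S) : map f ω = ω := by
  ext <;> simp

noncomputable def toComplex : Cyclo8 ℤ →+* ℂ :=
  liftRingHom (liftRingHom (Int.castRingHom ℂ) I (by simp)) ζ₈ (by simp [zeta8_mul_self])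

theorem toComplex_apply (x : Cyclo8 ℤ) :
    toComplex x = x.re.re + x.re.im * I + (x.im.re + x.im.im * I) * ζ₈ := by
  simp [toComplex]

@[simp]
theorem toComplex_omega : toComplex ω = ζ₈ := by
  simp [toComplex_apply]

theorem toComplex_eq_mk (x : Cyclo8 ℤ) :
    toComplex x =
      ⟨x.re.re + (x.im.re - x.im.im) * (√2 / 2), x.re.im + (x.im.re + x.im.im) * (√2 / 2)⟩ := by
  rw [toComplex_apply, zeta8_eq]
  apply Complex.ext <;> simp <;> ring

theorem toComplex_injective : Function.Injective toComplex := by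
  refine (injective_iff_map_eq_zero _).mpr fun ⟨⟨x0, x1⟩, ⟨x2, x3⟩⟩ hx => ?_
  rw [toComplex_eq_mk] at hx
  have hre : (x0 : ℝ) + (x2 - x3) * (√2 / 2) = 0 := congrArg Complex.re hx
  have him : (x1 : ℝ) + (x2 + x3) * (√2 / 2) = 0 := congrArg Complex.im hx
  obtain ⟨h0, h23⟩ := irrational_sqrt_two.eq_zero_of_add_mul_eq_zero (m := 2 * x0) (n := x2 - x3)
    (by push_cast; linear_combination 2 * hre)
  obtain ⟨h1, h23'⟩ := irrational_sqrt_two.eq_zero_of_add_mul_eq_zero (m := 2 * x1) (n := x2 + x3)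
    (by push_cast; linear_combination 2 * him)
  ext <;> simp <;> omega

instance : IsDomain (Cyclo8 ℤ) := toComplex_injective.isDomain toComplex

theorem exists_natCast_mul_eq_toComplex {a : ℂ} (ha : a ∈ Fset) :
    ∃ n : ℕ, n ≠ 0 ∧ ∃ A : Cyclo8 ℤ, n * a = toComplex A := by
  obtain ⟨p, q, r, s, rfl⟩ := ha
  set d := p.den * q.den * r.den * s.den
  have scale (t : ℚ) (ht : t.den ∣ d) : ∃ m : ℤ, (d : ℂ) * t = m := by
    obtain ⟨m, hm⟩ := t.exists_intCast_eq_mul_of_den_dvd ht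
    exact ⟨m, by exact_mod_cast hm⟩
  obtain ⟨P, hP⟩ := scale p ⟨q.den * r.den * s.den, by ring⟩
  obtain ⟨Q, hQ⟩ := scale q ⟨p.den * r.den * s.den, by ring⟩
  obtain ⟨R, hR⟩ := scale r ⟨p.den * q.den * s.den, by ring⟩
  obtain ⟨S, hS⟩ := scale s ⟨p.den * q.den * r.den, by ring⟩
  refine ⟨d, by positivity, ⟨⟨P, R⟩, ⟨Q, S⟩⟩, ?_⟩
  rw [toComplex_apply, ← hP, ← hQ, ← hR, ← hS, ← zeta8_mul_self]
  ring

local notation "π₅" => map (Int.castRingHom (ZMod 5))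

theorem not_isSquare_omega_zmod_five : ¬ IsSquare (ω : Cyclo8 (ZMod 5)) := by
  rintro ⟨⟨⟨x0, x1⟩, ⟨x2, x3⟩⟩, h⟩
  revert x0 x1 x2 x3
  decide

instance : IsReduced (Cyclo8 (ZMod 5)) :=
  (isReduced_iff_pow_one_lt 2 one_lt_two).mpr <| by
    rintro ⟨⟨x0, x1⟩, ⟨x2, x3⟩⟩
    rw [sq]
    revert x0 x1 x2 x3
    decide

theorem map_five : π₅ 5 = 0 := by
  ext <;> decide

theorem five_dvd_of_map_eq_zero {x : Cyclo8 ℤ} (hx : π₅ x = 0) : 5 ∣ x := by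
  obtain ⟨⟨x0, x1⟩, ⟨x2, x3⟩⟩ := x
  simp only [map_apply, eq_intCast, QuadraticAlgebra.ext_iff, re_zero, im_zero,
    ZMod.intCast_zmod_eq_zero_iff_dvd, Nat.cast_ofNat] at hx
  obtain ⟨⟨⟨y0, rfl⟩, ⟨y1, rfl⟩⟩, ⟨y2, rfl⟩, ⟨y3, rfl⟩⟩ := hx
  exact ⟨⟨⟨y0, y1⟩, ⟨y2, y3⟩⟩, by ext <;> simp⟩

theorem five_dvd_of_five_dvd_sq {x : Cyclo8 ℤ} (h : 5 ∣ x ^ 2) : 5 ∣ x := by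
  obtain ⟨c, hc⟩ := h
  refine five_dvd_of_map_eq_zero <| IsReduced.eq_zero _ ⟨2, ?_⟩
  rw [← map_pow, hc, map_mul, map_five, zero_mul]

theorem five_dvd_of_sq_add_mul_sub_sq_eq {A B : Cyclo8 ℤ} {n : ℕ}
    (h : A ^ 2 + A * B - B ^ 2 = (n : Cyclo8 ℤ) ^ 2 * ω) : 5 ∣ n ∧ 5 ∣ A ∧ 5 ∣ B := by
  have hsq : (A + 3 * B) ^ 2 = (n : Cyclo8 ℤ) ^ 2 * ω + 5 * (B * (A + 2 * B)) := by
    linear_combination h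
  have hn : 5 ∣ n := by
    by_contra hn
    have hunit : IsUnit (n : Cyclo8 (ZMod 5)) := by
      have : IsUnit (n : ZMod 5) := (ZMod.isUnit_iff_coprime n 5).mpr
        ((Nat.Prime.coprime_iff_not_dvd Nat.prime_five).mpr hn).symm
      simpa using this.map (algebraMap (ZMod 5) (Cyclo8 (ZMod 5)))
    have hred : π₅ (A + 3 * B) * π₅ (A + 3 * B) = (n : Cyclo8 (ZMod 5)) ^ 2 * ω := by
      simpa only [map_pow, map_add, map_mul, map_natCast, map_omega, map_five, zero_mul, add_zero,
        ← pow_two] using congrArg π₅ hsq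
    exact not_isSquare_omega_zmod_five (IsSquare.of_mul_self_eq_sq_mul hunit hred)
  obtain ⟨k, rfl⟩ := hn
  push_cast at h hsq
  obtain ⟨D, hD⟩ : 5 ∣ A + 3 * B :=
    five_dvd_of_five_dvd_sq ⟨5 * (k : Cyclo8 ℤ) ^ 2 * ω + B * (A + 2 * B),
      by linear_combination hsq⟩
  obtain rfl : A = 5 * D - 3 * B := by linear_combination hD
  have hB : 5 * B ^ 2 = 5 * (5 * ((k : Cyclo8 ℤ) ^ 2 * ω - D ^ 2 + D * B)) := by
    linear_combination h
  obtain ⟨E, rfl⟩ := five_dvd_of_five_dvd_sq ⟨_, mul_left_cancel₀ (by decide) hB⟩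
  exact ⟨dvd_mul_right 5 k, ⟨D - 3 * E, by ring⟩, dvd_mul_right 5 E⟩

theorem sq_add_mul_sub_sq_ne_sq_mul_omega (A B : Cyclo8 ℤ) {n : ℕ} (hn : n ≠ 0) :
    A ^ 2 + A * B - B ^ 2 ≠ (n : Cyclo8 ℤ) ^ 2 * ω := by
  induction n using Nat.strong_induction_on generalizing A B with
  | _ n ih =>
  intro h
  obtain ⟨⟨k, rfl⟩, ⟨A, rfl⟩, ⟨B, rfl⟩⟩ := five_dvd_of_sq_add_mul_sub_sq_eq h
  refine ih k (by omega) A B (by omega) (mul_left_cancel₀ (by decide : (25 : Cyclo8 ℤ) ≠ 0) ?_)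
  push_cast at h
  linear_combination h

end Cyclo8

theorem sq_add_mul_sub_sq_ne_zeta8 {a b : ℂ} (ha : a ∈ Fset) (hb : b ∈ Fset) :
    a ^ 2 + a * b - b ^ 2 ≠ ζ₈ := by
  intro h
  obtain ⟨m, hm, A, hA⟩ := Cyclo8.exists_natCast_mul_eq_toComplex ha
  obtain ⟨m', hm', B, hB⟩ := Cyclo8.exists_natCast_mul_eq_toComplex hb
  refine Cyclo8.sq_add_mul_sub_sq_ne_sq_mul_omega (m' * A) (m * B) (mul_ne_zero hm hm')
    (Cyclo8.toComplex_injective ?_)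
  simp only [map_sub, map_add, map_mul, map_pow, map_natCast, Cyclo8.toComplex_omega, ← hA, ← hB]
  push_cast
  linear_combination ((m : ℂ) * m') ^ 2 * h

theorem add_mul_theta_mul_add_mul_thetaBar (a b : ℂ) :
    (a + b * θ) * (a + b * θbar) = a ^ 2 + a * b - b ^ 2 := by
  have hsum : θ + θbar = 1 := by
    rw [θ, θbar, ← Complex.ofReal_add]
    norm_num
  have hprod : θ * θbar = -1 := by
    have h5 := Real.sq_sqrt (show (0 : ℝ) ≤ 5 by norm_num)
    rw [θ, θbar, ← Complex.ofReal_mul,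
      show (1 + √5) / 2 * ((1 - √5) / 2) = (-1 : ℝ) by linear_combination -(1 / 4) * h5]
    simp
  linear_combination (a * b) * hsum + b ^ 2 * hprod

/-- `ζ₈` is not a relative norm of `K = ℚ(ζ₈, √5)` over `F = ℚ(ζ₈)`: for every
`z = a + bθ ∈ K` (with `a, b ∈ F`), `z·σ(z) = (a + bθ)(a + bθ̄) ≠ ζ₈`; equivalently,
for all `a, b ∈ F`, `a² + a·b − b² ≠ ζ₈`. -/
theorem zeta8_not_a_norm :
    (∀ a b : ℂ, a ∈ Fset → b ∈ Fset → (a + b * θ) * (a + b * θbar) ≠ ζ₈) ∧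
    (∀ a b : ℂ, a ∈ Fset → b ∈ Fset → a ^ 2 + a * b - b ^ 2 ≠ ζ₈) := by
  refine ⟨fun a b ha hb => ?_, fun a b ha hb => sq_add_mul_sub_sq_ne_zeta8 ha hb⟩
  rw [add_mul_theta_mul_add_mul_thetaBar]
  exact sq_add_mul_sub_sq_ne_zeta8 ha hb
end

section
/- Let Γ = [[0, 1], [i, 0]]. If x, y ∈ K = ℚ(ζ₈, √5) satisfy the matrix equation Γ·Ξ(x, y) = τ(Ξ(x, y)), then x = 0 and y = 0. Equivalently, no nonzero element Θ = Ξ(x, y) of the matrix representation of the Golden division algebra satisfies ΓΘ = τ(Θ). -/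
open Complex Matrix

/-- The subfield `ℚ(i) = {p + q·i : p, q ∈ ℚ}` of `ℂ`, as a set. -/
def Qi : Set ℂ := {z | ∃ p q : ℚ, z = (p : ℂ) + (q : ℂ) * Complex.I}

/-- The element `x = x₀ + x₁ζ₈ + x₂θ + x₃ζ₈θ` of `K = ℚ(ζ₈, √5)` with coordinates
`x₀, x₁, x₂, x₃ ∈ ℚ(i)` over the basis `(1, ζ₈, θ, ζ₈θ)`. -/
noncomputable def emb (a : Fin 4 → ℂ) : ℂ := a 0 + a 1 * ζ₈ + a 2 * θ + a 3 * ζ₈ * θ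

/-- `σ(x) = x₀ + x₁ζ₈ + x₂θ̄ + x₃ζ₈θ̄` (the automorphism `σ` fixes `ℚ(ζ₈)`, `σ(√5) = −√5`). -/
noncomputable def embσ (a : Fin 4 → ℂ) : ℂ := a 0 + a 1 * ζ₈ + a 2 * θbar + a 3 * ζ₈ * θbar

/-- `τ(x) = x₀ − x₁ζ₈ + x₂θ − x₃ζ₈θ` (the automorphism `τ` fixes `√5`, `τ(ζ₈) = −ζ₈`). -/
noncomputable def embτ (a : Fin 4 → ℂ) : ℂ := a 0 - a 1 * ζ₈ + a 2 * θ - a 3 * ζ₈ * θ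

/-- `τ(σ(x)) = σ(τ(x)) = x₀ − x₁ζ₈ + x₂θ̄ − x₃ζ₈θ̄`. -/
noncomputable def embστ (a : Fin 4 → ℂ) : ℂ := a 0 - a 1 * ζ₈ + a 2 * θbar - a 3 * ζ₈ * θbar

/-- The Golden-code codeword matrix `Ξ(x, y) = [[x, y], [ζ₈·σ(y), σ(x)]]`. -/
noncomputable def Xi (a b : Fin 4 → ℂ) : Matrix (Fin 2) (Fin 2) ℂ :=
  !![emb a, emb b; ζ₈ * embσ b, embσ a]

/-- The entrywise image `τ(Ξ(x, y)) = [[τ(x), τ(y)], [τ(ζ₈)·τ(σ(y)), τ(σ(x))]]`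
`= [[τ(x), τ(y)], [−ζ₈·στ(y), στ(x)]]`. -/
noncomputable def tauXi (a b : Fin 4 → ℂ) : Matrix (Fin 2) (Fin 2) ℂ :=
  !![embτ a, embτ b; -ζ₈ * embστ b, embστ a]

/-- The matrix `Γ = [[0, 1], [i, 0]]` of the code `C_{(2,2,Γ)}`. -/
noncomputable def Γmat : Matrix (Fin 2) (Fin 2) ℂ := !![0, 1; Complex.I, 0]

/-!
The (0,1) and (1,1) entries of `Γ·Ξ(x, y) = τ(Ξ(x, y))` say `σ(x) = τ(y)` and `i·y = στ(x)`.
Applying `τ` to the first gives `y = στ(x)`, so `i·y = y` and `y = 0`; then `σ(x) = τ(0) = 0`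
forces `x = 0`. Since `σ` and `τ` are only given through coordinates, the argument runs on
coordinate vectors and needs that `(1, ζ₈, θ, ζ₈θ)` is linearly independent over `ℚ(i)`. Taking
real and imaginary parts, with `ζ₈ = √2 (1 + i)/2`, this is the `ℚ`-linear independence of
`1, √2, θ, √2θ`, which holds because `√2` is irrational and `θ ∉ ℚ(√2)`: squaring
`√5 = u + v√2` would make `5` or `10` the square of a rational.
-/

theorem Irrational.eq_zero_of_ratCast_add_ratCast_mul_eq_zero {x : ℝ} (hx : Irrational x)
    {p q : ℚ} (h : (p : ℝ) + q * x = 0) : p = 0 ∧ q = 0 := by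
  obtain rfl : q = 0 := by
    by_contra hq
    exact ((hx.ratCast_mul hq).ratCast_add p).ne_zero h
  simpa using h

/-- `1, x, y, xy` are linearly independent over `ℚ` when `x` is a quadratic irrationality and
`y ∉ ℚ(x)`. -/
theorem Irrational.eq_zero_of_add_mul_add_add_mul_mul_eq_zero {x y : ℝ} {d : ℚ}
    (hx : Irrational x) (hxx : x * x = d) (hy : ∀ u v : ℚ, y ≠ u + v * x) {p q r s : ℚ}
    (h : (p : ℝ) + q * x + (r + s * x) * y = 0) : p = 0 ∧ q = 0 ∧ r = 0 ∧ s = 0 := by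
  obtain ⟨rfl, rfl⟩ : r = 0 ∧ s = 0 := by
    by_contra hrs
    have hplus : (r : ℝ) + s * x ≠ 0 := fun h0 ↦
      hrs (hx.eq_zero_of_ratCast_add_ratCast_mul_eq_zero h0)
    have hminus : (r : ℝ) - s * x ≠ 0 := by
      intro h0
      have := hx.eq_zero_of_ratCast_add_ratCast_mul_eq_zero (p := r) (q := -s)
        (by push_cast; linarith)
      exact hrs ⟨this.1, neg_eq_zero.mp this.2⟩
    -- multiplying by the conjugate `r - s x` rationalizes the denominator of `y`
    have hn : ((r ^ 2 - d * s ^ 2 : ℚ) : ℝ) = (r + s * x) * (r - s * x) := by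
      push_cast
      linear_combination s ^ 2 * hxx
    have hn0 : ((r ^ 2 - d * s ^ 2 : ℚ) : ℝ) ≠ 0 := hn ▸ mul_ne_zero hplus hminus
    apply hy (-(p * r - d * q * s) / (r ^ 2 - d * s ^ 2))
      (-(q * r - p * s) / (r ^ 2 - d * s ^ 2))
    push_cast at hn0 ⊢
    field_simp
    linear_combination (r - s * x) * h + (q * s + s ^ 2 * y) * hxx
  obtain ⟨hp, hq⟩ := hx.eq_zero_of_ratCast_add_ratCast_mul_eq_zero (p := p) (q := q)
    (by simpa using h)
  exact ⟨hp, hq, rfl, rfl⟩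

theorem Real.goldenRatio_ne_ratCast_add_ratCast_mul_sqrt_two (p q : ℚ) :
    Real.goldenRatio ≠ p + q * √2 := by
  intro h
  have h5 : √5 = (2 * p - 1 : ℚ) + (2 * q : ℚ) * √2 := by
    push_cast
    linear_combination 2 * h
  set u : ℚ := 2 * p - 1
  set v : ℚ := 2 * q
  have hsq : ((u ^ 2 + 2 * v ^ 2 - 5 : ℚ) : ℝ) + ((2 * u * v : ℚ) : ℝ) * √2 = 0 := by
    push_cast
    linear_combination (-(u + v * √2 + √5)) * h5 + Real.mul_self_sqrt (by norm_num : (0 : ℝ) ≤ 5)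
      - v ^ 2 * Real.mul_self_sqrt (by norm_num : (0 : ℝ) ≤ 2)
  obtain ⟨hnorm, huv⟩ := irrational_sqrt_two.eq_zero_of_ratCast_add_ratCast_mul_eq_zero hsq
  rcases mul_eq_zero.mp huv with hu | hv
  · have : IsSquare (10 : ℚ) := ⟨2 * v, by nlinarith⟩
    exact absurd this (by norm_num)
  · have : IsSquare (5 : ℚ) := ⟨u, by nlinarith⟩
    exact absurd this (by norm_num)

theorem ζ₈_eq : ζ₈ = √2 * ((1 + I) / 2) := by
  rw [ζ₈, show (Real.pi : ℂ) * I / 4 = ((Real.pi / 4 : ℝ) : ℂ) * I by push_cast; ring,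
    exp_mul_I, ← ofReal_cos, ← ofReal_sin, Real.cos_pi_div_four, Real.sin_pi_div_four]
  push_cast
  ring

theorem θbar_eq : θbar = 1 - θ := by
  simp only [θbar, θ]
  push_cast
  ring

theorem Qi.add_mem {x y : ℂ} (hx : x ∈ Qi) (hy : y ∈ Qi) : x + y ∈ Qi := by
  obtain ⟨p, q, rfl⟩ := hx
  obtain ⟨r, s, rfl⟩ := hy
  exact ⟨p + r, q + s, by push_cast; ring⟩

theorem Qi.neg_mem {x : ℂ} (hx : x ∈ Qi) : -x ∈ Qi := by
  obtain ⟨p, q, rfl⟩ := hx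
  exact ⟨-p, -q, by push_cast; ring⟩

theorem Qi.sub_mem {x y : ℂ} (hx : x ∈ Qi) (hy : y ∈ Qi) : x - y ∈ Qi :=
  sub_eq_add_neg x y ▸ Qi.add_mem hx (Qi.neg_mem hy)

theorem Complex.ofReal_add_ofReal_mul_I_eq_zero {x y : ℝ} (h : (x : ℂ) + y * I = 0) :
    x = 0 ∧ y = 0 := by
  simpa [Complex.ext_iff] using h

theorem eq_zero_of_emb_eq_zero {a : Fin 4 → ℂ} (ha : ∀ i, a i ∈ Qi) (h : emb a = 0) :
    a = 0 := by
  choose p q hpq using ha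
  obtain ⟨hre, him⟩ := Complex.ofReal_add_ofReal_mul_I_eq_zero
    (x := (p 0 : ℝ) + (((p 1 - q 1) / 2 : ℚ) : ℝ) * √2
      + (p 2 + (((p 3 - q 3) / 2 : ℚ) : ℝ) * √2) * Real.goldenRatio)
    (y := (q 0 : ℝ) + (((p 1 + q 1) / 2 : ℚ) : ℝ) * √2
      + (q 2 + (((p 3 + q 3) / 2 : ℚ) : ℝ) * √2) * Real.goldenRatio)
    (by
      rw [← h]
      simp only [emb, hpq, ζ₈_eq, θ]
      push_cast
      linear_combination (-(√2 / 2 * (q 1 + q 3 * ((1 + √5) / 2))) : ℂ) * I_sq)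
  obtain ⟨hp0, hdiff1, hp2, hdiff3⟩ := irrational_sqrt_two.eq_zero_of_add_mul_add_add_mul_mul_eq_zero
    (Real.mul_self_sqrt zero_le_two) (Real.goldenRatio_ne_ratCast_add_ratCast_mul_sqrt_two) hre
  obtain ⟨hq0, hsum1, hq2, hsum3⟩ := irrational_sqrt_two.eq_zero_of_add_mul_add_add_mul_mul_eq_zero
    (Real.mul_self_sqrt zero_le_two) (Real.goldenRatio_ne_ratCast_add_ratCast_mul_sqrt_two) him
  have hp1 : p 1 = 0 := by linarith
  have hp3 : p 3 = 0 := by linarith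
  have hq1 : q 1 = 0 := by linarith
  have hq3 : q 3 = 0 := by linarith
  ext i
  fin_cases i <;> simp [hpq, hp0, hp1, hp2, hp3, hq0, hq1, hq2, hq3]

theorem emb_injOn : Set.InjOn emb {a | ∀ i, a i ∈ Qi} := by
  intro a ha b hb hab
  rw [← sub_eq_zero]
  exact eq_zero_of_emb_eq_zero (fun i ↦ Qi.sub_mem (ha i) (hb i))
    (by simp only [emb, Pi.sub_apply] at hab ⊢; linear_combination hab)

/-- `σ` on coordinates: since `θ̄ = 1 - θ`, `σ(x) = (x₀ + x₂) + (x₁ + x₃)ζ₈ - x₂θ - x₃ζ₈θ`. -/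
def coordσ (a : Fin 4 → ℂ) : Fin 4 → ℂ := ![a 0 + a 2, a 1 + a 3, -a 2, -a 3]

def coordτ (a : Fin 4 → ℂ) : Fin 4 → ℂ := ![a 0, -a 1, a 2, -a 3]

theorem coordσ_involutive : Function.Involutive coordσ := by
  intro a
  ext i
  fin_cases i <;> simp [coordσ]

theorem coordτ_involutive : Function.Involutive coordτ := by
  intro a
  ext i
  fin_cases i <;> simp [coordτ]

theorem coordσ_mem_Qi {a : Fin 4 → ℂ} (ha : ∀ i, a i ∈ Qi) : ∀ i, coordσ a i ∈ Qi := by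
  intro i
  fin_cases i
  exacts [Qi.add_mem (ha 0) (ha 2), Qi.add_mem (ha 1) (ha 3), Qi.neg_mem (ha 2), Qi.neg_mem (ha 3)]

theorem coordτ_mem_Qi {a : Fin 4 → ℂ} (ha : ∀ i, a i ∈ Qi) : ∀ i, coordτ a i ∈ Qi := by
  intro i
  fin_cases i
  exacts [ha 0, Qi.neg_mem (ha 1), ha 2, Qi.neg_mem (ha 3)]

theorem emb_coordσ (a : Fin 4 → ℂ) : emb (coordσ a) = embσ a := by
  simp only [emb, embσ, coordσ, θbar_eq, cons_val_zero, cons_val_one, cons_val]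
  ring

theorem emb_coordτ (a : Fin 4 → ℂ) : emb (coordτ a) = embτ a := by
  simp only [emb, embτ, coordτ, cons_val_zero, cons_val_one, cons_val]
  ring

theorem emb_coordτ_coordσ (a : Fin 4 → ℂ) : emb (coordτ (coordσ a)) = embστ a := by
  simp only [emb, embστ, coordσ, coordτ, θbar_eq, cons_val_zero, cons_val_one, cons_val]
  ring

/-- If `x, y ∈ K = ℚ(ζ₈, √5)` satisfy `Γ·Ξ(x, y) = τ(Ξ(x, y))`, then `x = 0` and `y = 0`:
no nonzero element `Θ = Ξ(x, y)` of the Golden division algebra satisfies `ΓΘ = τ(Θ)`. -/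
theorem no_nonzero_solution_of_Gamma_eq :
    ∀ a b : Fin 4 → ℂ, (∀ i, a i ∈ Qi) → (∀ i, b i ∈ Qi) →
      Γmat * Xi a b = tauXi a b → emb a = 0 ∧ emb b = 0 := by
  intro a b ha hb h
  have hσx : embσ a = embτ b := by
    simpa [Γmat, Xi, tauXi, Matrix.mul_apply] using congrFun₂ h 0 1
  have hiy : I * emb b = embστ a := by
    simpa [Γmat, Xi, tauXi, Matrix.mul_apply] using congrFun₂ h 1 1
  have hστ : coordσ a = coordτ b :=
    emb_injOn (coordσ_mem_Qi ha) (coordτ_mem_Qi hb) (by rw [emb_coordσ, emb_coordτ, hσx])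
  have hy : emb b = 0 := by
    have hστy : embστ a = emb b := by rw [← emb_coordτ_coordσ, hστ, coordτ_involutive]
    have : (I - 1) * emb b = 0 := by linear_combination hiy + hστy
    exact (mul_eq_zero.mp this).resolve_left (by simp [Complex.ext_iff])
  have hb0 : b = 0 := eq_zero_of_emb_eq_zero hb hy
  have ha0 : a = 0 := by
    rw [← coordσ_involutive a, hστ, hb0]
    ext i
    fin_cases i <;> simp [coordσ, coordτ]
  exact ⟨by simp [ha0, emb], hy⟩
end
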